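/- Assignment move lemma: let σ be a deterministic assignment, let π be a permutation of N with SD(R,π) = σ, and let 1 ≤ k < j ≤ n be such that σ(π(j)) is agent π(j)'s most preferred house among the houses remaining after the first k agents of π have picked (i.e., among H ∖ {σ(π(1)),…,σ(π(k))}). Define π' = π(1) … π(k) π(j) π(k+1) … π(j−1) π(j+1) … π(n). Then SD(R,π') = σ. -/

import Mathlib

open Classical in
/-- `best r B` is the most preferred house in `B` according to the strict preference `r`
(an arbitrary element if no such house exists, which cannot happen for a nonempty `B` and a
strict linear order `r`). -/
noncomputable def best {H : Type*} [Nonempty H] (r : H → H → Prop) (B : Finset H) : H :=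
  if h : ∃ x, x ∈ B ∧ ∀ y ∈ B, y ≠ x → r x y then h.choose else Classical.arbitrary H

/-- `taken P π t` is the set of houses picked by the first `t` dictators `π 0, …, π (t-1)`,
each picking his most preferred house among the remaining ones. -/
noncomputable def taken {n : ℕ} {H : Type*} [Fintype H] [DecidableEq H] [Nonempty H]
    (P : Fin n → H → H → Prop) (π : Equiv.Perm (Fin n)) : ℕ → Finset H
  | 0 => ∅
  | t + 1 =>
      if h : t < n then
        insert (best (P (π ⟨t, h⟩)) (Finset.univ \ taken P π t)) (taken P π t)
      else taken P π t

/-- The serial dictatorship assignment: agent `i`, picking at position `π.symm i`, receives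
his most preferred house among those not taken by the agents preceding him in `π`. -/
noncomputable def SD {n : ℕ} {H : Type*} [Fintype H] [DecidableEq H] [Nonempty H]
    (P : Fin n → H → H → Prop) (π : Equiv.Perm (Fin n)) (i : Fin n) : H :=
  best (P i) (Finset.univ \ taken P π (π.symm i).1)

/-- `remainingAfter σ π k` is the set of houses remaining after the first `k` agents of `π`
have received their houses under the assignment `σ`, i.e. `H ∖ {σ(π 1), …, σ(π k)}`
(1-based positions; in Lean the first `k` agents are `π ⟨0,_⟩, …, π ⟨k-1,_⟩`). -/
def remainingAfter {n : ℕ} {H : Type*} [Fintype H] [DecidableEq H]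
    (σ : Fin n → H) (π : Equiv.Perm (Fin n)) (k : ℕ) : Finset H :=
  Finset.univ \ (Finset.univ.filter (fun s : Fin n => s.1 < k)).image (fun s => σ (π s))

/-!
An agent's serial-dictatorship pick is his best house among those left by his predecessors, so
`SD P π = σ` says exactly that every agent's `σ`-house is his best one among the houses that `σ`
gives to nobody before him in `π` (`SD_eq_iff`). Along `π'` this set is unchanged for the first `k`
agents and for the agents from position `j` on; for the moved agent it is the set of the hypothesis;
and an agent shifted back by one position faces his old set minus the moved agent's house, which
is not his own pick, so by independence of irrelevant alternatives his best house stays the same.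
-/

section Best

variable {H : Type*} {r : H → H → Prop} {B C : Finset H} {x : H}

theorem best_eq_of_forall_rel [Nonempty H] [Std.Asymm r] (hx : x ∈ B)
    (hrx : ∀ y ∈ B, y ≠ x → r x y) : best r B = x := by
  have hex : ∃ z, z ∈ B ∧ ∀ y ∈ B, y ≠ z → r z y := ⟨x, hx, hrx⟩
  rw [best, dif_pos hex]
  by_contra hne
  exact asymm (hrx _ hex.choose_spec.1 hne) (hex.choose_spec.2 x hx (Ne.symm hne))

theorem exists_forall_rel_of_nonempty [IsStrictTotalOrder H r] (hB : B.Nonempty) :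
    ∃ x ∈ B, ∀ y ∈ B, y ≠ x → r x y := by
  obtain ⟨⟨x, hx⟩, -, hmin⟩ := (B.finite_toSet.wellFoundedOn (r := r)).has_min Set.univ
    ⟨⟨_, hB.choose_spec⟩, trivial⟩
  refine ⟨x, hx, fun y hy hyx => ?_⟩
  rcases trichotomous_of r x y with h | rfl | h
  · exact h
  · exact absurd rfl hyx
  · exact absurd h (hmin ⟨y, hy⟩ trivial)

theorem best_eq_best_of_subset [Nonempty H] [IsStrictTotalOrder H r] (hC : best r B ∈ C)
    (hCB : C ⊆ B) : best r C = best r B := by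
  obtain ⟨x, hx, hrx⟩ := exists_forall_rel_of_nonempty (r := r) ⟨_, hCB hC⟩
  rw [best_eq_of_forall_rel hx hrx] at hC ⊢
  exact best_eq_of_forall_rel hC fun y hy => hrx y (hCB hy)

end Best

section Remaining

variable {n : ℕ} {H : Type*} [Fintype H] [DecidableEq H] (σ : Fin n → H)
  (π : Equiv.Perm (Fin n))

theorem remainingAfter_succ (t : ℕ) (ht : t < n) :
    remainingAfter σ π (t + 1) = (remainingAfter σ π t).erase (σ (π ⟨t, ht⟩)) := by
  have : (Finset.univ.filter fun u : Fin n => u.1 < t + 1) =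
      insert ⟨t, ht⟩ (Finset.univ.filter fun u : Fin n => u.1 < t) := by
    ext u
    simp only [Finset.mem_filter, Finset.mem_univ, true_and, Finset.mem_insert, Fin.ext_iff]
    omega
  rw [remainingAfter, remainingAfter, this, Finset.image_insert, Finset.sdiff_insert]

theorem mem_remainingAfter (hσ : Function.Injective σ) (u : Fin n) (t : ℕ) :
    σ (π u) ∈ remainingAfter σ π t ↔ t ≤ u := by
  simp [remainingAfter, hσ.eq_iff]

theorem remainingAfter_congr {π' : Equiv.Perm (Fin n)} {t : ℕ}
    (h : ∀ s : Fin n, s.1 < t → π' s = π s) :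
    remainingAfter σ π' t = remainingAfter σ π t := by
  unfold remainingAfter
  congr 1
  exact Finset.image_congr fun s hs => by simp_all

theorem best_erase_remainingAfter [Nonempty H] {r : H → H → Prop} [IsStrictTotalOrder H r]
    (hσ : Function.Injective σ) {t a : Fin n}
    (hpick : best r (remainingAfter σ π t) = σ (π t)) (hat : a ≠ t) :
    best r ((remainingAfter σ π t).erase (σ (π a))) = σ (π t) := by
  rw [best_eq_best_of_subset _ (Finset.erase_subset _ _), hpick]
  rw [hpick, Finset.mem_erase, mem_remainingAfter σ π hσ]
  exact ⟨hσ.ne (π.injective.ne hat.symm), le_rfl⟩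

end Remaining

section Move

variable {n : ℕ} {H : Type*} [Fintype H] [DecidableEq H] (σ : Fin n → H)
  {π π' : Equiv.Perm (Fin n)} {k j : ℕ}

theorem remainingAfter_move_of_lt (hkn : k < n) (hjn : j - 1 < n)
    (h1 : ∀ t : Fin n, t.1 < k → π' t = π t)
    (h2 : π' ⟨k, hkn⟩ = π ⟨j - 1, hjn⟩)
    (h3 : ∀ t : Fin n, k < t.1 → t.1 ≤ j - 1 →
      π' t = π ⟨t.1 - 1, lt_of_le_of_lt (Nat.sub_le t.1 1) t.2⟩)
    {t : ℕ} (hkt : k ≤ t) (htj : t < j) :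
    remainingAfter σ π' (t + 1) = (remainingAfter σ π t).erase (σ (π ⟨j - 1, hjn⟩)) := by
  induction t, hkt using Nat.le_induction with
  | base => rw [remainingAfter_succ σ π' k (by omega), h2, remainingAfter_congr σ π h1]
  | succ t hkt ih =>
    have h3t : π' ⟨t + 1, by omega⟩ = π ⟨t, by omega⟩ :=
      h3 ⟨t + 1, by omega⟩ (by simp; omega) (by simp; omega)
    rw [remainingAfter_succ σ π' (t + 1) (by omega), ih (by omega), h3t, Finset.erase_right_comm,
      ← remainingAfter_succ]

theorem remainingAfter_move_of_le (hkj : k < j) (hkn : k < n) (hjn : j - 1 < n)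
    (h1 : ∀ t : Fin n, t.1 < k → π' t = π t)
    (h2 : π' ⟨k, hkn⟩ = π ⟨j - 1, hjn⟩)
    (h3 : ∀ t : Fin n, k < t.1 → t.1 ≤ j - 1 →
      π' t = π ⟨t.1 - 1, lt_of_le_of_lt (Nat.sub_le t.1 1) t.2⟩)
    (h4 : ∀ t : Fin n, j - 1 < t.1 → π' t = π t)
    {t : ℕ} (hjt : j ≤ t) (htn : t ≤ n) :
    remainingAfter σ π' t = remainingAfter σ π t := by
  induction t, hjt using Nat.le_induction with
  | base =>
    have hmove := remainingAfter_move_of_lt σ hkn hjn h1 h2 h3 (t := j - 1) (by omega) (by omega)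
    rw [show j - 1 + 1 = j by omega] at hmove
    rw [hmove, ← remainingAfter_succ, show j - 1 + 1 = j by omega]
  | succ t hjt ih =>
    rw [remainingAfter_succ σ π' t (by omega), ih (by omega),
      h4 ⟨t, by omega⟩ (by simp; omega), remainingAfter_succ σ π t]

end Move

section SerialDictatorship

variable {n : ℕ} {H : Type*} [Fintype H] [DecidableEq H] [Nonempty H]
  (P : Fin n → H → H → Prop) (π : Equiv.Perm (Fin n)) (σ : Fin n → H)

theorem sdiff_taken_eq_remainingAfter
    (h : ∀ s : Fin n, Finset.univ \ taken P π s = remainingAfter σ π s →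
      best (P (π s)) (Finset.univ \ taken P π s) = σ (π s)) :
    ∀ t ≤ n, Finset.univ \ taken P π t = remainingAfter σ π t := by
  intro t
  induction t with
  | zero => simp [taken, remainingAfter]
  | succ t ih =>
    intro ht
    have IH := ih (by omega)
    rw [taken, dif_pos (show t < n by omega), Finset.sdiff_insert, h ⟨t, ht⟩ IH, IH,
      remainingAfter_succ]

theorem SD_eq_iff :
    SD P π = σ ↔ ∀ s : Fin n, best (P (π s)) (remainingAfter σ π s) = σ (π s) := by
  have hSD :
      SD P π = σ ↔ ∀ s : Fin n, best (P (π s)) (Finset.univ \ taken P π s) = σ (π s) := by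
    refine ⟨fun h s => by simpa [SD] using congrFun h (π s), fun h => funext fun i => ?_⟩
    simpa [SD] using h (π.symm i)
  rw [hSD]
  refine ⟨fun h s => ?_, fun h s => ?_⟩
  · rw [← sdiff_taken_eq_remainingAfter P π σ (fun s _ => h s) s s.2.le]
    exact h s
  · rw [sdiff_taken_eq_remainingAfter P π σ (fun s hs => hs ▸ h s) s s.2.le]
    exact h s

end SerialDictatorship

/-- Assignment move lemma: let `σ` be a deterministic assignment with `SD P π = σ`, and let
`1 ≤ k < j ≤ n` be such that `σ(π j)` (where `π j` is the agent at 1-based position `j`,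
i.e. `π ⟨j-1, _⟩`) is that agent's most preferred house among the houses remaining after the
first `k` agents of `π` have picked.  Then the permutation `π'` obtained from `π` by moving
this agent to position `k+1` (shifting positions `k+1, …, j-1` back by one and leaving the
first `k` and the last `n-j` positions unchanged) also satisfies `SD P π' = σ`. -/
theorem sd_assignment_move {n : ℕ} {H : Type*} [Fintype H] [DecidableEq H] [Nonempty H]
    (P : Fin n → H → H → Prop) (hP : ∀ i, IsStrictTotalOrder H (P i))
    (σ : Fin n → H) (hσ : Function.Bijective σ)
    (π π' : Equiv.Perm (Fin n))
    (k j : ℕ) (hkj : k < j) (hj : j ≤ n)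
    (hSD : SD P π = σ)
    (hmem : σ (π ⟨j - 1, by omega⟩) ∈ remainingAfter σ π k)
    (hbest : ∀ h' ∈ remainingAfter σ π k, h' ≠ σ (π ⟨j - 1, by omega⟩) →
      P (π ⟨j - 1, by omega⟩) (σ (π ⟨j - 1, by omega⟩)) h')
    (h1 : ∀ t : Fin n, t.1 < k → π' t = π t)
    (h2 : π' ⟨k, by omega⟩ = π ⟨j - 1, by omega⟩)
    (h3 : ∀ t : Fin n, k < t.1 → t.1 ≤ j - 1 →
      π' t = π ⟨t.1 - 1, lt_of_le_of_lt (Nat.sub_le t.1 1) t.2⟩)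
    (h4 : ∀ t : Fin n, j - 1 < t.1 → π' t = π t) :
    SD P π' = σ := by
  rw [SD_eq_iff] at hSD ⊢
  intro s
  rcases lt_trichotomy s.1 k with hsk | hsk | hsk
  · rw [h1 s hsk, remainingAfter_congr σ π fun u hu => h1 u (hu.trans hsk)]
    exact hSD s
  · rw [show s = ⟨k, by omega⟩ from Fin.ext hsk, h2, remainingAfter_congr σ π h1]
    exact best_eq_of_forall_rel hmem hbest
  rcases lt_or_ge s.1 j with hsj | hsj
  · obtain ⟨t, ht⟩ : ∃ t, s.1 = t + 1 := ⟨s.1 - 1, by omega⟩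
    have hrem := remainingAfter_move_of_lt σ (by omega) (by omega) h1 h2 h3 (t := t)
      (by omega) (by omega)
    rw [← ht] at hrem
    rw [h3 s hsk (by omega), hrem]
    simp only [ht, Nat.add_sub_cancel]
    exact best_erase_remainingAfter σ π hσ.1 (t := ⟨t, by omega⟩) (a := ⟨j - 1, by omega⟩)
      (hSD _) (by simp [Fin.ext_iff]; omega)
  · rw [h4 s (by omega),
      remainingAfter_move_of_le σ hkj (by omega) (by omega) h1 h2 h3 h4 hsj s.2.le]
    exact hSD s
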